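/- Let R be a regular ring of prime characteristic p admitting the I_e(−) operation, let u ∈ R, J an ideal with u·J ⊆ J^[p], and ν_e = 1+p+...+p^{e−1}. Then the sequence of ideals I_e(u^{ν_e}·J) is descending: I_{e+1}(u^{ν_{e+1}}·J) ⊆ I_e(u^{ν_e}·J) for all e ≥ 0. -/

import Mathlib

/-!
Write `m = u ^ ν_e` and `T = I_e(m J)`. Since `ν_{e+1} = 1 + p ν_e`, every generator of
`u ^ ν_{e+1} J` has the form `m ^ p (u x)` with `x ∈ J`, and `u x ∈ J^[p]`, so
`u ^ ν_{e+1} J ⊆ (m J)^[p] ⊆ (T^[p^e])^[p] ⊆ T^[p^{e+1}]`; the last inclusion is where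
characteristic `p` enters, through additivity of Frobenius. Minimality of `I_{e+1}` concludes.
-/

/-- The `q`-th Frobenius power of an ideal: the ideal generated by `q`-th powers of its
elements. -/
def fpow {R : Type*} [CommRing R] (q : ℕ) (J : Ideal R) : Ideal R :=
  Ideal.span ((fun a => a ^ q) '' (J : Set R))

/-- `ν_e = 1 + p + ... + p^{e-1}`. -/
def nu (p e : ℕ) : ℕ := ∑ i ∈ Finset.range e, p ^ i

lemma nu_succ (p e : ℕ) : nu p (e + 1) = 1 + p * nu p e := by
  simp only [nu, Finset.sum_range_succ', Finset.mul_sum, pow_succ', pow_zero, add_comm]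

section Frobenius

variable {R : Type*} [CommRing R]

lemma pow_mem_fpow (q : ℕ) {J : Ideal R} {x : R} (hx : x ∈ J) : x ^ q ∈ fpow q J :=
  Ideal.subset_span ⟨x, hx, rfl⟩

lemma fpow_mono (q : ℕ) {J K : Ideal R} (h : J ≤ K) : fpow q J ≤ fpow q K :=
  Ideal.span_mono (Set.image_mono h)

lemma fpow_mul_le (q : ℕ) (I J : Ideal R) : fpow q I * fpow q J ≤ fpow q (I * J) := by
  rw [fpow, fpow, Ideal.span_mul_span', Ideal.span_le]
  rintro _ ⟨_, ⟨a, ha, rfl⟩, _, ⟨b, hb, rfl⟩, rfl⟩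
  simpa only [mul_pow, SetLike.mem_coe] using pow_mem_fpow q (Ideal.mul_mem_mul ha hb)

lemma fpow_fpow_le (p : ℕ) [ExpChar R p] (q : ℕ) (L : Ideal R) :
    fpow p (fpow q L) ≤ fpow (q * p) L := by
  refine Ideal.span_le.mpr ?_
  rintro _ ⟨a, ha, rfl⟩
  change a ^ p ∈ fpow (q * p) L
  induction ha using Submodule.span_induction with
  | mem x hx =>
    obtain ⟨y, hy, rfl⟩ := hx
    simpa only [← pow_mul] using pow_mem_fpow (q * p) hy
  | zero => simp [zero_pow (expChar_pos R p).ne']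
  | add x y _ _ hx hy => simpa only [add_pow_expChar] using Ideal.add_mem _ hx hy
  | smul r x _ hx => simpa only [smul_eq_mul, mul_pow] using Ideal.mul_mem_left _ _ hx

end Frobenius

theorem stmt_7 {R : Type*} [CommRing R] (p : ℕ) (hp : p.Prime) [CharP R p]
    (Ie : ℕ → Ideal R → Ideal R)
    (hIe : ∀ (e : ℕ) (A : Ideal R), A ≤ fpow (p ^ e) (Ie e A))
    (hIemin : ∀ (e : ℕ) (A L : Ideal R), A ≤ fpow (p ^ e) L → Ie e A ≤ L)
    (u : R) (J : Ideal R)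
    (hu : ∀ x ∈ J, u * x ∈ fpow p J) :
    ∀ e : ℕ, Ie (e + 1) (Ideal.span {u ^ nu p (e + 1)} * J) ≤ Ie e (Ideal.span {u ^ nu p e} * J) := by
  intro e
  have : Fact p.Prime := ⟨hp⟩
  set m := u ^ nu p e
  apply hIemin
  rw [Ideal.span_singleton_mul_le_iff]
  intro x hx
  have hsplit : u ^ nu p (e + 1) * x = m ^ p * (u * x) := by
    rw [nu_succ, ← pow_mul]; ring
  have hmem : m ^ p * (u * x) ∈ fpow p (Ideal.span {m} * J) :=
    fpow_mul_le p _ J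
      (Ideal.mul_mem_mul (pow_mem_fpow p (Ideal.mem_span_singleton_self m)) (hu x hx))
  rw [hsplit]
  exact fpow_fpow_le p (p ^ e) _ (fpow_mono p (hIe e _) hmem)
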